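/- arXiv:1310.0891 — 3 statements merged into one kernel-verified Lean document; each statement's English description precedes it below -/
import Mathlib

section
/- Let κ be an infinite cardinal, δ ≤ κ a cardinal, and ⟨μ_α : α < δ⟩ a sequence of pairwise distinct normal measures on κ. Then there exists a sequence ⟨A_α : α < δ⟩ such that A_α ∈ μ_α for each α < δ and A_α ∩ A_β = ∅ whenever α ≠ β. -/
/-!
Embed the index set into `κ` as `i ↦ e i`, and for `i ≠ j` choose `D i j ∈ μ i` with
`D i j` and `D j i` disjoint. By normality, `μ i` contains the diagonal intersection
`A i = {ξ > e i | ξ ∈ D i j whenever e j < ξ}`. A point `ξ` in both `A i` and `A j` lies above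
`e i` and `e j`, hence in `D i j ∩ D j i = ∅`.
-/

universe u

/-- An ultrafilter `W` on a set is `κ`-complete if the intersection of any family of
fewer than `κ` members of `W` is again a member of `W`. -/
def UFComplete (κ : Cardinal.{u}) {X : Type u} (W : Ultrafilter X) : Prop :=
  ∀ (ι : Type u) (f : ι → Set X), Cardinal.mk ι < κ → (∀ i, f i ∈ W) → (⋂ i, f i) ∈ W

/-- A normal measure on an infinite cardinal `κ` (whose underlying set of ordinals below
`κ` is realized as `κ.ord.ToType`) is a `κ`-complete nonprincipal ultrafilter `U` on `κ`
such that every function `f : κ → κ` regressive on a set in `U` is constant on a set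
in `U`. -/
def IsNormalMeasure (κ : Cardinal.{u}) (U : Ultrafilter κ.ord.ToType) : Prop :=
  UFComplete κ U ∧ (∀ x : κ.ord.ToType, ({x} : Set κ.ord.ToType) ∉ U) ∧
    ∀ f : κ.ord.ToType → κ.ord.ToType,
      {ξ | f ξ < ξ} ∈ U → ∃ c, {ξ | f ξ = c} ∈ U

open Set Filter

namespace Ultrafilter

theorem exists_mem_notMem_of_ne {X : Type*} {U V : Ultrafilter X} (h : U ≠ V) :
    ∃ S ∈ U, S ∉ V := by
  by_contra! hUV
  exact h (eq_of_le fun S hS => hUV S hS).symm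

theorem exists_pairwise_disjoint_mem {X ι : Type*} {μ : ι → Ultrafilter X}
    (hμ : Function.Injective μ) :
    ∃ D : ι → ι → Set X, (∀ i j, D i j ∈ μ i) ∧ ∀ i j, i ≠ j → Disjoint (D i j) (D j i) := by
  have hsep : ∀ i j, ∃ S ∈ μ i, i ≠ j → S ∉ μ j := fun i j => by
    by_cases hij : i = j
    · exact ⟨univ, univ_mem, fun h => absurd hij h⟩
    · obtain ⟨S, hSi, hSj⟩ := exists_mem_notMem_of_ne (hμ.ne hij)
      exact ⟨S, hSi, fun _ => hSj⟩
  choose S hSi hSj using hsep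
  classical
  refine ⟨fun i j => if i = j then univ else S i j \ S j i, fun i j => ?_, fun i j hij => ?_⟩
  · dsimp only
    split_ifs with hij
    · exact univ_mem
    · exact (sdiff_mem_iff _).2 ⟨hSi i j, hSj j i (Ne.symm hij)⟩
  · simp only [if_neg hij, if_neg (Ne.symm hij)]
    exact disjoint_sdiff_sdiff

end Ultrafilter

theorem UFComplete.compl_mem_of_mk_lt {κ : Cardinal.{u}} {X : Type u} {U : Ultrafilter X}
    (hU : UFComplete κ U) (hsing : ∀ x : X, ({x} : Set X) ∉ U) {S : Set X}
    (hS : Cardinal.mk S < κ) : Sᶜ ∈ U := by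
  have hcompl : Sᶜ = ⋂ x : S, ({(x : X)}ᶜ : Set X) := by
    ext ξ
    simp only [mem_compl_iff, mem_iInter, mem_singleton_iff, Subtype.forall]
    exact ⟨fun hξ x hx h => hξ (h ▸ hx), fun hξ hS => hξ ξ hS rfl⟩
  rw [hcompl]
  exact hU S _ hS fun x => Ultrafilter.compl_mem_iff_notMem.2 (hsing x)

namespace IsNormalMeasure

variable {κ : Cardinal.{u}} {U : Ultrafilter κ.ord.ToType}

theorem Ioi_mem (hU : IsNormalMeasure κ U) (x : κ.ord.ToType) : Ioi x ∈ U := by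
  have hIio : (Iio x)ᶜ ∈ U :=
    hU.1.compl_mem_of_mk_lt hU.2.1 (by simpa using Cardinal.mk_Iio_lt x)
  have hx : {x}ᶜ ∈ U := Ultrafilter.compl_mem_iff_notMem.2 (hU.2.1 x)
  exact mem_of_superset (inter_mem hIio hx) fun ξ ⟨hle, hne⟩ =>
    lt_of_le_of_ne (notMem_Iio.1 hle) (Ne.symm hne)

theorem diagInter_mem (hU : IsNormalMeasure κ U) {Y : κ.ord.ToType → Set κ.ord.ToType}
    (hY : ∀ η, Y η ∈ U) : {ξ | ∀ η < ξ, ξ ∈ Y η} ∈ U := by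
  by_contra hdiag
  set B := {ξ | ∃ η < ξ, ξ ∉ Y η}
  have hB : B ∈ U := by
    have := Ultrafilter.compl_mem_iff_notMem.2 hdiag
    convert this using 1
    ext ξ
    simp [B]
  have hwitness : ∀ ξ, ∃ η, ξ ∈ B → η < ξ ∧ ξ ∉ Y η := fun ξ => by
    by_cases hξ : ξ ∈ B
    · obtain ⟨η, hη⟩ := hξ
      exact ⟨η, fun _ => hη⟩
    · exact ⟨ξ, fun h => absurd h hξ⟩
  choose f hf using hwitness
  obtain ⟨c, hc⟩ := hU.2.2 f (mem_of_superset hB fun ξ hξ => (hf ξ hξ).1)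
  obtain ⟨ξ, ⟨hξc, hξB⟩, hξY⟩ := Ultrafilter.nonempty_of_mem (inter_mem (inter_mem hc hB) (hY c))
  exact (hf ξ hξB).2 (hξc ▸ hξY)

theorem diagInter_mem_of_embedding (hU : IsNormalMeasure κ U) {ι : Type*} (e : ι ↪ κ.ord.ToType)
    {Y : ι → Set κ.ord.ToType} (hY : ∀ j, Y j ∈ U) : {ξ | ∀ j, e j < ξ → ξ ∈ Y j} ∈ U := by
  have hfiber : ∀ η, (⋂ j ∈ e ⁻¹' {η}, Y j) ∈ U := fun η =>
    (biInter_mem' fun _ ha _ hb => e.injective (ha.trans hb.symm)).2 fun j _ => hY j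
  refine mem_of_superset (hU.diagInter_mem hfiber) fun ξ hξ j hj => ?_
  exact mem_iInter₂.1 (hξ (e j) hj) j rfl

end IsNormalMeasure

theorem disjoint_choice_of_normal_general (κ : Cardinal.{u})
    {ι : Type u} (hι : Cardinal.mk ι ≤ κ)
    (μ : ι → Ultrafilter κ.ord.ToType) (hdist : Function.Injective μ)
    (hnormal : ∀ i, IsNormalMeasure κ (μ i)) :
    ∃ A : ι → Set κ.ord.ToType, (∀ i, A i ∈ μ i) ∧ ∀ i j, i ≠ j → A i ∩ A j = ∅ := by
  obtain ⟨e⟩ : Cardinal.mk ι ≤ Cardinal.mk κ.ord.ToType := by rwa [Cardinal.mk_ord_toType]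
  obtain ⟨D, hDmem, hDdisj⟩ := Ultrafilter.exists_pairwise_disjoint_mem hdist
  refine ⟨fun i => Ioi (e i) ∩ {ξ | ∀ j, e j < ξ → ξ ∈ D i j}, fun i => ?_, fun i j hij => ?_⟩
  · exact inter_mem ((hnormal i).Ioi_mem (e i))
      ((hnormal i).diagInter_mem_of_embedding e (hDmem i))
  · refine eq_empty_of_forall_notMem fun ξ ⟨⟨hξi, hDi⟩, ⟨hξj, hDj⟩⟩ => ?_
    exact (hDdisj i j hij).notMem_of_mem_left (hDi j hξj) (hDj i hξi)

/-- If `κ` is an infinite cardinal, `δ ≤ κ` a cardinal, and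
`⟨μ_α : α < δ⟩` a sequence of pairwise distinct normal measures on `κ`, then there is a
sequence `⟨A_α : α < δ⟩` with `A_α ∈ μ_α` for each `α < δ` and `A_α ∩ A_β = ∅` for
`α ≠ β`. -/
theorem disjoint_choice_of_normal (κ : Cardinal.{u}) (hκ : Cardinal.aleph0 ≤ κ)
    {ι : Type u} (hι : Cardinal.mk ι ≤ κ)
    (μ : ι → Ultrafilter κ.ord.ToType) (hdist : Function.Injective μ)
    (hnormal : ∀ i, IsNormalMeasure κ (μ i)) :
    ∃ A : ι → Set κ.ord.ToType, (∀ i, A i ∈ μ i) ∧ ∀ i j, i ≠ j → A i ∩ A j = ∅ :=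
  disjoint_choice_of_normal_general κ hι μ hdist hnormal
end

section
/- Let κ be an infinite cardinal, U a normal measure on κ, and U' an ultrafilter on a set T such that U' ≤_RK U, that is, U' = f_*(U) for some function f : κ → T. Then U' is principal or U' is isomorphic to U. -/
universe u

/-- Ultrafilters `U₁` on `X₁` and `U₂` on `X₂` are isomorphic if there are `A₁ ∈ U₁`,
`A₂ ∈ U₂` and a bijection `h : A₁ → A₂` such that for every `X ⊆ A₁`:
`X ∈ U₁ ↔ h[X] ∈ U₂`. -/
def UFIso {X₁ : Type u} {X₂ : Type u} (U₁ : Ultrafilter X₁) (U₂ : Ultrafilter X₂) : Prop :=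
  ∃ (A₁ : Set X₁) (A₂ : Set X₂) (h : X₁ → X₂),
    A₁ ∈ U₁ ∧ A₂ ∈ U₂ ∧ Set.BijOn h A₁ A₂ ∧ ∀ X ⊆ A₁, (X ∈ U₁ ↔ h '' X ∈ U₂)

/-!
Split `κ` into the ordinals `ξ` whose value `f ξ` was already taken at some `η < ξ`, and
the rest. If the first set is in `U`, choosing such an `η` for each `ξ` gives a regressive
function, which by normality is constant, say `c`, on a set in `U`; then `f = f c` on a set
in `U`, so `f_*(U)` is principal. Otherwise `f` is injective on the second set, which is in
`U`, and its inverse there carries `f_*(U)` onto `U`.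
-/

open Set Filter

theorem injOn_compl_setOf_exists_lt_eq {α β : Type*} [LinearOrder α] (f : α → β) :
    InjOn f {ξ | ∃ η < ξ, f η = f ξ}ᶜ := by
  intro x hx y hy hxy
  rcases lt_trichotomy x y with h | h | h
  · exact absurd ⟨x, h, hxy⟩ hy
  · exact h
  · exact absurd ⟨y, h, hxy.symm⟩ hx

namespace Ultrafilter

theorem exists_map_eq_pure_of_regressive {α β : Type*} [LinearOrder α] {U : Ultrafilter α}
    (hU : ∀ g : α → α, {ξ | g ξ < ξ} ∈ U → ∃ c, {ξ | g ξ = c} ∈ U) {f : α → β}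
    (hS : {ξ | ∃ η < ξ, f η = f ξ} ∈ U) : ∃ t, U.map f = pure t := by
  have earlier : ∀ ξ, ∃ η, (∃ η < ξ, f η = f ξ) → η < ξ ∧ f η = f ξ := fun ξ => by
    by_cases h : ∃ η < ξ, f η = f ξ
    · obtain ⟨η, hη⟩ := h
      exact ⟨η, fun _ => hη⟩
    · exact ⟨ξ, fun h' => absurd h' h⟩
  choose g hg using earlier
  obtain ⟨c, hc⟩ := hU g (mem_of_superset hS fun ξ hξ => (hg ξ hξ).1)
  have hfc : {ξ | f ξ = f c} ∈ U := by
    refine mem_of_superset (inter_mem hc hS) ?_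
    rintro ξ ⟨hξc : g ξ = c, hξ⟩
    show f ξ = f c
    rw [← (hg ξ hξ).2, hξc]
  exact ⟨f c, coe_injective <| (neBot _).eq_pure_iff.2 hfc⟩

theorem ufIso_map_of_injOn {X Y : Type u} {U : Ultrafilter X} {f : X → Y} {A : Set X}
    (hA : A ∈ U) (hf : InjOn f A) : UFIso (U.map f) U := by
  have : Nonempty X := nonempty_of_neBot (U : Filter X)
  have hinv : InvOn (Function.invFunOn f A) f A (f '' A) := hf.bijOn_image.invOn_invFunOn
  refine ⟨f '' A, A, Function.invFunOn f A, image_mem_map hA, hA,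
    hf.bijOn_image.symm hinv.symm, fun X hX => ⟨fun hXU => ?_, fun hXU => ?_⟩⟩
  · refine mem_of_superset (inter_mem (mem_map.1 hXU) hA) ?_
    rintro ξ ⟨hξX, hξA⟩
    exact ⟨f ξ, hξX, hinv.1 hξA⟩
  · rw [← hinv.2.image_image' hX]
    exact image_mem_map hXU

end Ultrafilter

theorem rudin_keisler_below_normal_general (κ : Cardinal.{u})
    (U : Ultrafilter κ.ord.ToType) (hU : IsNormalMeasure κ U)
    {T : Type u} (f : κ.ord.ToType → T) (U' : Ultrafilter T) (hU' : U' = U.map f) :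
    (∃ t : T, U' = pure t) ∨ UFIso U' U := by
  subst hU'
  by_cases hS : {ξ | ∃ η < ξ, f η = f ξ} ∈ U
  · exact .inl (Ultrafilter.exists_map_eq_pure_of_regressive hU.2.2 hS)
  · exact .inr (Ultrafilter.ufIso_map_of_injOn (Ultrafilter.compl_mem_iff_notMem.2 hS)
      (injOn_compl_setOf_exists_lt_eq f))

/-- If `κ` is an infinite cardinal, `U` a normal measure on `κ`, and
`U' = f_*(U)` (i.e. `U' ≤_RK U`) for some `f : κ → T`, then `U'` is principal or `U'`
is isomorphic to `U`. -/
theorem rudin_keisler_below_normal (κ : Cardinal.{u}) (hκ : Cardinal.aleph0 ≤ κ)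
    (U : Ultrafilter κ.ord.ToType) (hU : IsNormalMeasure κ U)
    {T : Type u} (f : κ.ord.ToType → T) (U' : Ultrafilter T) (hU' : U' = U.map f) :
    (∃ t : T, U' = pure t) ∨ UFIso U' U :=
  rudin_keisler_below_normal_general κ U hU f U' hU'
end

section
/- Let κ be an infinite cardinal and μ⃗ = ⟨μ_α : α < κ⟩ a sequence of pairwise distinct κ-complete ultrafilters on κ. Then every antichain in the forcing notion P_{μ⃗} (a set of pairwise incompatible conditions) has cardinality at most κ. -/
universe u

/-- The set of ordinals below `κ`, realized as a type. -/
abbrev KT (κ : Cardinal.{u}) : Type u := κ.ord.ToType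

/-- A condition of the forcing `P_{μ⃗}`: a nonempty finite subset `s` of `κ` together
with a `μ⃗`-choice function `F` (i.e. `F α ∈ μ_α` for all `α < κ`). -/
def IsCond {κ : Cardinal.{u}} (μ : KT κ → Ultrafilter (KT κ))
    (p : Finset (KT κ) × (KT κ → Set (KT κ))) : Prop :=
  p.1.Nonempty ∧ ∀ α, p.2 α ∈ μ α

/-- `p = (s', F')` is stronger than `q = (s, F)`:
(a) `s ⊆ s'` and `s' ∩ (max s + 1) = s`; (b) `F' α ⊆ F α` for all `α`;
(c) `s'(i) ∈ F (s'(i-1))` for all `|s| ≤ i < |s'|` (increasing enumeration). -/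
def Stronger {κ : Cardinal.{u}} (p q : Finset (KT κ) × (KT κ → Set (KT κ))) : Prop :=
  q.1 ⊆ p.1 ∧ (∀ x ∈ p.1, (∃ y ∈ q.1, x ≤ y) → x ∈ q.1) ∧
  (∀ α, p.2 α ⊆ q.2 α) ∧
  ∀ i : ℕ, q.1.card ≤ i → ∀ h : i < (p.1.sort (· ≤ ·)).length,
    (p.1.sort (· ≤ ·)).get ⟨i, h⟩ ∈ q.2 ((p.1.sort (· ≤ ·)).get ⟨i - 1, by omega⟩)

/-- Compatibility: some condition is stronger than both. -/
def Compatible {κ : Cardinal.{u}} (μ : KT κ → Ultrafilter (KT κ))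
    (p q : Finset (KT κ) × (KT κ → Set (KT κ))) : Prop :=
  ∃ r, IsCond μ r ∧ Stronger r p ∧ Stronger r q

/-! Two conditions with the same finite part are compatible: keep the finite part and
intersect the choice functions pointwise. So an antichain injects into the finite subsets
of `κ`, of which there are `κ` many. -/

lemma stronger_of_fst_eq {κ : Cardinal.{u}} {p q : Finset (KT κ) × (KT κ → Set (KT κ))}
    (hfst : p.1 = q.1) (hsnd : ∀ α, p.2 α ⊆ q.2 α) : Stronger p q := by
  refine ⟨hfst.ge, fun x hx _ => hfst ▸ hx, hsnd, fun i hi h => ?_⟩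
  rw [Finset.length_sort, hfst] at h
  omega

lemma compatible_of_fst_eq {κ : Cardinal.{u}} {μ : KT κ → Ultrafilter (KT κ)}
    {p q : Finset (KT κ) × (KT κ → Set (KT κ))} (hp : IsCond μ p) (hq : IsCond μ q)
    (hfst : p.1 = q.1) : Compatible μ p q :=
  ⟨(p.1, fun α => p.2 α ∩ q.2 α),
    ⟨hp.1, fun α => Filter.inter_mem (hp.2 α) (hq.2 α)⟩,
    stronger_of_fst_eq rfl fun _ => Set.inter_subset_left,
    stronger_of_fst_eq hfst fun _ => Set.inter_subset_right⟩

lemma injOn_fst_of_antichain {κ : Cardinal.{u}} {μ : KT κ → Ultrafilter (KT κ)}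
    {A : Set (Finset (KT κ) × (KT κ → Set (KT κ)))} (hA : ∀ p ∈ A, IsCond μ p)
    (hanti : ∀ p ∈ A, ∀ q ∈ A, p ≠ q → ¬ Compatible μ p q) :
    Set.InjOn Prod.fst A := fun p hp q hq hfst => by
  by_contra hne
  exact hanti p hp q hq hne (compatible_of_fst_eq (hA p hp) (hA q hq) hfst)

lemma mk_KT (κ : Cardinal.{u}) : Cardinal.mk (KT κ) = κ := by
  rw [Cardinal.mk_toType, Cardinal.card_ord]

theorem antichain_le_kappa_general (κ : Cardinal.{u}) (hκ : Cardinal.aleph0 ≤ κ)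
    (μ : KT κ → Ultrafilter (KT κ))
    (A : Set (Finset (KT κ) × (KT κ → Set (KT κ))))
    (hA : ∀ p ∈ A, IsCond μ p)
    (hanti : ∀ p ∈ A, ∀ q ∈ A, p ≠ q → ¬ Compatible μ p q) :
    Cardinal.mk A ≤ κ := by
  have : Infinite (KT κ) := by rw [Cardinal.infinite_iff, mk_KT]; exact hκ
  calc Cardinal.mk A ≤ Cardinal.mk (Finset (KT κ)) :=
        Cardinal.mk_le_of_injective (Set.injOn_iff_injective.mp (injOn_fst_of_antichain hA hanti))
    _ = κ := by rw [Cardinal.mk_finset_of_infinite, mk_KT]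

/-- Every antichain of the forcing `P_{μ⃗}` has cardinality at most `κ`
(the `κ⁺`-chain condition). -/
theorem antichain_le_kappa (κ : Cardinal.{u}) (hκ : Cardinal.aleph0 ≤ κ)
    (μ : KT κ → Ultrafilter (KT κ)) (hdist : Function.Injective μ)
    (hcomp : ∀ α, UFComplete κ (μ α))
    (A : Set (Finset (KT κ) × (KT κ → Set (KT κ))))
    (hA : ∀ p ∈ A, IsCond μ p)
    (hanti : ∀ p ∈ A, ∀ q ∈ A, p ≠ q → ¬ Compatible μ p q) :
    Cardinal.mk A ≤ κ :=
  antichain_le_kappa_general κ hκ μ A hA hanti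
end
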